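/- arXiv:1909.11035 — 4 statements merged into one kernel-verified Lean document; each statement's English description precedes it below -/
import Mathlib

section
/- Let 0 < λ < 1 and let f be holomorphic on 𝔻. If lim_{|a|→1⁻} (1−|a|²)^{(1−λ)/2} |f(a)| = 0 and lim_{|a|→1⁻} (1−|a|²)^{(1−λ)/2} ‖f∘φ_a − f(a)‖_{H²} = 0, then lim_{|a|→1⁻} (1−|a|²)^{(3−λ)/2} |f′(a)| = 0. -/
open MeasureTheory Complex Set Filter Metric

noncomputable section

/-!
With `p = (1 - λ) / 2`: by the Cauchy estimate on the circle of radius `(1 - |a|) / 2` about `a`,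
on which `1 - |z|²` is at least `(1 - |a|²) / 4`, one gets
`(1 - |a|²)^(p + 1) |f'(a)| ≤ 4^(p + 1) sup_z (1 - |z|²)^p |f(z)|`,
and this circle moves to the boundary together with `a`.
-/

/-- The integral mean (1/2π)∫₀^{2π} |g(re^{iθ})|² dθ. -/
def hardyMean (g : ℂ → ℂ) (r : ℝ) : ℝ :=
  (2 * Real.pi)⁻¹ * ∫ θ in (0:ℝ)..(2 * Real.pi), ‖g ((r : ℂ) * Complex.exp (θ * Complex.I))‖ ^ 2

/-- The Hardy space H² norm ‖g‖_{H²} = (sup_{0<r<1} hardyMean g r)^{1/2}. -/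
def hardyNorm (g : ℂ → ℂ) : ℝ :=
  Real.sqrt (sSup {x | ∃ r : ℝ, 0 < r ∧ r < 1 ∧ x = hardyMean g r})

/-- The Möbius automorphism φ_a(z) = (a − z)/(1 − \bar{a}z) of 𝔻. -/
def moebius (a z : ℂ) : ℂ := (a - z) / (1 - (starRingEnd ℂ) a * z)

def VanishesAtUnitCircle (g : ℂ → ℝ) : Prop :=
  ∀ ε > 0, ∃ δ > 0, ∀ a ∈ ball (0 : ℂ) 1, 1 - δ < ‖a‖ → g a < ε

section HalfBall

variable {a z : ℂ}

theorem norm_sub_le_of_dist_le_half (hz : dist z a ≤ (1 - ‖a‖) / 2) :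
    |‖z‖ - ‖a‖| ≤ (1 - ‖a‖) / 2 :=
  (abs_norm_sub_norm_le z a).trans ((dist_eq_norm z a).symm.le.trans hz)

theorem norm_lt_one_of_dist_le_half (ha : ‖a‖ < 1) (hz : dist z a ≤ (1 - ‖a‖) / 2) :
    ‖z‖ < 1 := by
  linarith [(abs_le.mp (norm_sub_le_of_dist_le_half hz)).2]

theorem one_sub_sq_norm_div_four_le (ha : ‖a‖ < 1) (hz : dist z a ≤ (1 - ‖a‖) / 2) :
    (1 - ‖a‖ ^ 2) / 4 ≤ 1 - ‖z‖ ^ 2 := by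
  have hz_le : ‖z‖ ≤ (1 + ‖a‖) / 2 := by
    linarith [(abs_le.mp (norm_sub_le_of_dist_le_half hz)).2]
  nlinarith [norm_nonneg z, norm_nonneg a]

end HalfBall

theorem one_sub_sq_norm_rpow_mul_norm_deriv_le {E : Type*} [NormedAddCommGroup E]
    [NormedSpace ℂ E] {f : ℂ → E} {p M : ℝ} (hf : DifferentiableOn ℂ f (ball 0 1))
    (hp : 0 ≤ p) {a : ℂ} (ha : ‖a‖ < 1)
    (hM : ∀ z ∈ sphere a ((1 - ‖a‖) / 2), (1 - ‖z‖ ^ 2) ^ p * ‖f z‖ ≤ M) :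
    (1 - ‖a‖ ^ 2) ^ (p + 1) * ‖deriv f a‖ ≤ 4 ^ (p + 1) * M := by
  set ρ := (1 - ‖a‖) / 2 with hρ_def
  set u := 1 - ‖a‖ ^ 2 with hu_def
  have hρ : 0 < ρ := by linarith
  have hu : 0 < u := by nlinarith [norm_nonneg a]
  have hM_nonneg : 0 ≤ M := by
    have hz : a + ρ ∈ sphere a ρ := by simp [abs_of_pos hρ]
    have hz_lt := norm_lt_one_of_dist_le_half ha (mem_sphere.mp hz).le
    exact (mul_nonneg (Real.rpow_nonneg (by nlinarith [norm_nonneg (a + ρ)]) p)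
      (norm_nonneg _)).trans (hM _ hz)
  have hd : DiffContOnCl ℂ f (ball a ρ) := by
    refine (hf.mono ?_).diffContOnCl
    rw [closure_ball a hρ.ne']
    exact fun z hz => mem_ball_zero_iff.mpr (norm_lt_one_of_dist_le_half ha hz)
  have hsphere : ∀ z ∈ sphere a ρ, ‖f z‖ ≤ M / (u / 4) ^ p := by
    intro z hz
    have hweight : (u / 4) ^ p ≤ (1 - ‖z‖ ^ 2) ^ p :=
      Real.rpow_le_rpow (by positivity) (one_sub_sq_norm_div_four_le ha (mem_sphere.mp hz).le) hp
    rw [le_div_iff₀ (by positivity), mul_comm]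
    exact (mul_le_mul_of_nonneg_right hweight (norm_nonneg _)).trans (hM z hz)
  have hcauchy := Complex.norm_deriv_le_of_forall_mem_sphere_norm_le hρ hd hsphere
  have hup : 0 < u ^ p := Real.rpow_pos_of_pos hu p
  calc u ^ (p + 1) * ‖deriv f a‖ ≤ u ^ p * u * (M / (u / 4) ^ p / ρ) := by
        rw [Real.rpow_add_one hu.ne']
        gcongr
    _ = 4 ^ p * M * (2 * (1 + ‖a‖)) := by
        rw [Real.div_rpow hu.le (by norm_num)]
        field_simp
        ring
    _ ≤ 4 ^ (p + 1) * M := by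
        rw [Real.rpow_add_one (by norm_num)]
        have h4p : 0 ≤ (4 : ℝ) ^ p := by positivity
        nlinarith [mul_nonneg h4p hM_nonneg]

theorem VanishesAtUnitCircle.weighted_deriv {E : Type*} [NormedAddCommGroup E]
    [NormedSpace ℂ E] {f : ℂ → E} {p : ℝ} (hf : DifferentiableOn ℂ f (ball 0 1)) (hp : 0 ≤ p)
    (hvan : VanishesAtUnitCircle fun a => (1 - ‖a‖ ^ 2) ^ p * ‖f a‖) :
    VanishesAtUnitCircle fun a => (1 - ‖a‖ ^ 2) ^ (p + 1) * ‖deriv f a‖ := by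
  intro ε hε
  obtain ⟨δ, hδ, hnear⟩ := hvan (ε / 4 ^ (p + 1) / 2) (by positivity)
  refine ⟨δ / 2, by positivity, fun a ha hnear_a => ?_⟩
  have ha1 : ‖a‖ < 1 := mem_ball_zero_iff.mp ha
  have hsphere : ∀ z ∈ sphere a ((1 - ‖a‖) / 2),
      (1 - ‖z‖ ^ 2) ^ p * ‖f z‖ ≤ ε / 4 ^ (p + 1) / 2 := by
    intro z hz
    have hdist := (mem_sphere.mp hz).le
    refine (hnear z (mem_ball_zero_iff.mpr (norm_lt_one_of_dist_le_half ha1 hdist)) ?_).le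
    linarith [(abs_le.mp (norm_sub_le_of_dist_le_half hdist)).1]
  calc (1 - ‖a‖ ^ 2) ^ (p + 1) * ‖deriv f a‖ ≤ 4 ^ (p + 1) * (ε / 4 ^ (p + 1) / 2) :=
        one_sub_sq_norm_rpow_mul_norm_deriv_le hf hp ha1 hsphere
    _ < ε := by
        have : (0 : ℝ) < 4 ^ (p + 1) := by positivity
        field_simp
        linarith

theorem derivative_decay_of_vanishing_morrey_quantities_general
    (lam : ℝ) (hlam1 : lam < 1)
    (f : ℂ → ℂ) (hf : DifferentiableOn ℂ f (ball (0:ℂ) 1))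
    (h1 : ∀ ε > 0, ∃ δ > 0, ∀ a ∈ ball (0:ℂ) 1, 1 - δ < ‖a‖ →
      (1 - ‖a‖ ^ 2) ^ ((1 - lam) / 2) * ‖f a‖ < ε) :
    ∀ ε > 0, ∃ δ > 0, ∀ a ∈ ball (0:ℂ) 1, 1 - δ < ‖a‖ →
      (1 - ‖a‖ ^ 2) ^ ((3 - lam) / 2) * ‖deriv f a‖ < ε := by
  have hexp : (3 - lam) / 2 = (1 - lam) / 2 + 1 := by ring
  rw [hexp]
  exact VanishesAtUnitCircle.weighted_deriv hf (by linarith) h1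

/-- If f is holomorphic on 𝔻 with (1−|a|²)^{(1−λ)/2}|f(a)| → 0 and
(1−|a|²)^{(1−λ)/2}‖f∘φ_a − f(a)‖_{H²} → 0 as |a| → 1⁻, then
(1−|a|²)^{(3−λ)/2}|f′(a)| → 0 as |a| → 1⁻. -/
theorem derivative_decay_of_vanishing_morrey_quantities
    (lam : ℝ) (hlam0 : 0 < lam) (hlam1 : lam < 1)
    (f : ℂ → ℂ) (hf : DifferentiableOn ℂ f (ball (0:ℂ) 1))
    (h1 : ∀ ε > 0, ∃ δ > 0, ∀ a ∈ ball (0:ℂ) 1, 1 - δ < ‖a‖ →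
      (1 - ‖a‖ ^ 2) ^ ((1 - lam) / 2) * ‖f a‖ < ε)
    (h2 : ∀ ε > 0, ∃ δ > 0, ∀ a ∈ ball (0:ℂ) 1, 1 - δ < ‖a‖ →
      (1 - ‖a‖ ^ 2) ^ ((1 - lam) / 2) *
        hardyNorm (fun z => f (moebius a z) - f a) < ε) :
    ∀ ε > 0, ∃ δ > 0, ∀ a ∈ ball (0:ℂ) 1, 1 - δ < ‖a‖ →
      (1 - ‖a‖ ^ 2) ^ ((3 - lam) / 2) * ‖deriv f a‖ < ε :=
  derivative_decay_of_vanishing_morrey_quantities_general lam hlam1 f hf h1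

end
end

section
/- Let 0 < λ < 1, f(z) = (1−z)^{−(1−λ)/2} (principal branch), a ∈ ℝ \ {0}, and 0 < t < 2π/|a|. Then sup_{0<r<1} (1−r)^{(3−λ)/2} |e^{iat} f′(re^{iat}) − f′(r)| ≥ (1−λ)/2; in particular for the rotation semigroup φ_t(z) = e^{iat}z one has ‖f∘φ_t − f‖_{B^{(3−λ)/2}} ≥ (1−λ)/2. -/
/-!
Write μ = (1 - λ)/2, so that f'(z) = μ (1 - z)^{-(1+μ)} and (3 - λ)/2 = 1 + μ. On the radius,
(1 - r)^{1+μ} |f'(r)| = μ exactly, whereas (1 - r)^{1+μ} |f'(r e^{iat})| → 0 as r → 1⁻, because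
e^{iat} ≠ 1 keeps |1 - r e^{iat}| away from 0. So the weighted difference of derivatives tends
to μ, and since 1 - r ≤ 1 - r², the same radial values bound the Bloch norm from below.
-/

open Complex Set Filter Metric

noncomputable section

/-- The (extended-real-valued) Bloch-type norm ‖g‖_{B^α}. -/
def blochNormE (α : ℝ) (g : ℂ → ℂ) : ENNReal :=
  ENNReal.ofReal ‖g 0‖ +
    ⨆ z ∈ ball (0:ℂ) 1, ENNReal.ofReal ((1 - ‖z‖ ^ 2) ^ α * ‖deriv g z‖)

open Topology

lemma exp_ofReal_mul_I_ne_one {θ : ℝ} (h0 : θ ≠ 0) (h2π : |θ| < 2 * Real.pi) :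
    exp (θ * I) ≠ 1 := by
  rw [Ne, exp_eq_one_iff]
  rintro ⟨n, hn⟩
  have hθ : θ = n * (2 * Real.pi) := by simpa using congrArg im hn
  have hn0 : n ≠ 0 := by
    rintro rfl
    exact h0 (by simpa using hθ)
  have hn1 : (1 : ℝ) ≤ |(n : ℝ)| := by exact_mod_cast Int.one_le_abs hn0
  rw [hθ, abs_mul, abs_of_pos Real.two_pi_pos] at h2π
  nlinarith [Real.pi_pos]

lemma one_sub_mem_slitPlane {z : ℂ} (hz : ‖z‖ < 1) : 1 - z ∈ slitPlane := by
  simpa [sub_eq_add_neg] using mem_slitPlane_of_norm_lt_one (z := -z) (by simpa using hz)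

lemma hasDerivAt_one_sub_cpow (w : ℂ) {z : ℂ} (hz : 1 - z ∈ slitPlane) :
    HasDerivAt (fun z => (1 - z) ^ w) (-(w * (1 - z) ^ (w - 1))) z := by
  simpa using ((hasDerivAt_id z).const_sub 1).cpow_const hz

lemma norm_deriv_one_sub_cpow_neg (μ : ℝ) {z : ℂ} (hz : ‖z‖ < 1) :
    ‖deriv (fun z => (1 - z) ^ (-μ : ℂ)) z‖ = |μ| * ‖1 - z‖ ^ (-(1 + μ)) := by
  rw [(hasDerivAt_one_sub_cpow _ (one_sub_mem_slitPlane hz)).deriv, norm_neg, norm_mul,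
    show (-μ : ℂ) - 1 = ((-(1 + μ) : ℝ) : ℂ) by push_cast; ring, norm_cpow_real]
  simp

lemma deriv_comp_mul_sub {f : ℂ → ℂ} {c z : ℂ} (hcz : DifferentiableAt ℂ f (c * z))
    (hz : DifferentiableAt ℂ f z) :
    deriv (fun z => f (c * z) - f z) z = c * deriv f (c * z) - deriv f z := by
  have h := (hcz.hasDerivAt.comp z ((hasDerivAt_id z).const_mul c)).sub hz.hasDerivAt
  exact h.deriv.trans (by ring)

lemma ofReal_le_blochNormE {α : ℝ} (hα : 0 ≤ α) (g : ℂ → ℂ) {r : ℝ} (hr0 : 0 ≤ r)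
    (hr1 : r < 1) : ENNReal.ofReal ((1 - r) ^ α * ‖deriv g r‖) ≤ blochNormE α g := by
  have hweight : (1 - r) ^ α ≤ (1 - ‖(r : ℂ)‖ ^ 2) ^ α := by
    rw [norm_real, Real.norm_of_nonneg hr0]
    exact Real.rpow_le_rpow (by linarith) (by nlinarith) hα
  have hr : (r : ℂ) ∈ ball (0 : ℂ) 1 := by simpa [abs_of_nonneg hr0] using hr1
  calc ENNReal.ofReal ((1 - r) ^ α * ‖deriv g r‖)
      ≤ ENNReal.ofReal ((1 - ‖(r : ℂ)‖ ^ 2) ^ α * ‖deriv g r‖) := by gcongr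
    _ ≤ ⨆ z ∈ ball (0:ℂ) 1, ENNReal.ofReal ((1 - ‖z‖ ^ 2) ^ α * ‖deriv g z‖) :=
        le_biSup (fun z => ENNReal.ofReal ((1 - ‖z‖ ^ 2) ^ α * ‖deriv g z‖)) hr
    _ ≤ blochNormE α g := le_add_self

section Rotation

variable {μ : ℝ} {c : ℂ}

lemma tendsto_rpow_mul_norm_deriv_rotate_zero (hμ : -1 < μ) (hc : ‖c‖ = 1) (hc1 : c ≠ 1) :
    Tendsto (fun r : ℝ => (1 - r) ^ (1 + μ) * ‖deriv (fun z => (1 - z) ^ (-μ : ℂ)) (r * c)‖)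
      (𝓝[<] 1) (𝓝 0) := by
  have h1c : ‖1 - ((1 : ℝ) : ℂ) * c‖ ≠ 0 := by simpa [sub_eq_zero] using hc1.symm
  have hcont : ContinuousAt
      (fun r : ℝ => (1 - r) ^ (1 + μ) * (|μ| * ‖1 - r * c‖ ^ (-(1 + μ)))) 1 := by
    have hweight : ContinuousAt (fun r : ℝ => (1 - r) ^ (1 + μ)) 1 :=
      (continuousAt_const.sub continuousAt_id).rpow_const (Or.inr (by linarith))
    have hrot : ContinuousAt (fun r : ℝ => ‖1 - r * c‖ ^ (-(1 + μ))) 1 :=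
      (by fun_prop : ContinuousAt (fun r : ℝ => ‖1 - r * c‖) 1).rpow_const (Or.inl h1c)
    exact hweight.mul (continuousAt_const.mul hrot)
  have hlim := hcont.tendsto.mono_left (nhdsWithin_le_nhds (s := Iio 1))
  rw [sub_self, Real.zero_rpow (by linarith), zero_mul] at hlim
  refine hlim.congr' ?_
  filter_upwards [Ioo_mem_nhdsLT (by norm_num : (-1 : ℝ) < 1)] with r hr
  rw [norm_deriv_one_sub_cpow_neg]
  simpa [hc, abs_lt] using hr

theorem tendsto_rpow_mul_norm_rotate_deriv_sub (hμ : -1 < μ) (hc : ‖c‖ = 1) (hc1 : c ≠ 1) :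
    Tendsto (fun r : ℝ => (1 - r) ^ (1 + μ) *
        ‖c * deriv (fun z => (1 - z) ^ (-μ : ℂ)) (r * c) -
          deriv (fun z => (1 - z) ^ (-μ : ℂ)) (r : ℂ)‖) (𝓝[<] 1) (𝓝 |μ|) := by
  have hradial : ∀ r ∈ Ioo (0 : ℝ) 1,
      (1 - r) ^ (1 + μ) * ‖deriv (fun z => (1 - z) ^ (-μ : ℂ)) (r : ℂ)‖ = |μ| := by
    intro r hr
    have h1r : ‖1 - (r : ℂ)‖ = 1 - r := by
      rw [← ofReal_one, ← ofReal_sub, norm_real, Real.norm_of_nonneg (by linarith [hr.2])]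
    rw [norm_deriv_one_sub_cpow_neg _ (by simpa [abs_of_pos hr.1] using hr.2), h1r,
      mul_left_comm, ← Real.rpow_add (by linarith [hr.2]), add_neg_cancel, Real.rpow_zero,
      mul_one]
  rw [tendsto_iff_norm_sub_tendsto_zero]
  refine squeeze_zero' (Eventually.of_forall fun _ => norm_nonneg _) ?_
    (tendsto_rpow_mul_norm_deriv_rotate_zero hμ hc hc1)
  filter_upwards [Ioo_mem_nhdsLT one_pos] with r hr
  have hweight : 0 ≤ (1 - r) ^ (1 + μ) := Real.rpow_nonneg (by linarith [hr.2]) _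
  rw [← hradial r hr, ← mul_sub, Real.norm_eq_abs, abs_mul, abs_of_nonneg hweight]
  refine mul_le_mul_of_nonneg_left ?_ hweight
  have h := abs_norm_sub_norm_le (c * deriv (fun z => (1 - z) ^ (-μ : ℂ)) (r * c) -
    deriv (fun z => (1 - z) ^ (-μ : ℂ)) (r : ℂ)) (-deriv (fun z => (1 - z) ^ (-μ : ℂ)) (r : ℂ))
  rwa [norm_neg, sub_neg_eq_add, sub_add_cancel, norm_mul, hc, one_mul] at h

end Rotation

theorem rotation_bloch_lower_bound_general
    (lam : ℝ) (hlam1 : lam < 1)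
    (f : ℂ → ℂ) (hf : f = fun z => (1 - z) ^ (-((1 : ℂ) - (lam : ℂ)) / 2))
    (a : ℝ) (ha : a ≠ 0) (t : ℝ) (ht0 : 0 < t) (ht1 : t < 2 * Real.pi / |a|) :
    (∀ ε > 0, ∃ r : ℝ, 0 < r ∧ r < 1 ∧
      (1 - lam) / 2 - ε < (1 - r) ^ ((3 - lam) / 2) *
        ‖Complex.exp ((a * t : ℝ) * Complex.I) *
            deriv f ((r : ℂ) * Complex.exp ((a * t : ℝ) * Complex.I)) - deriv f (r : ℂ)‖) ∧
    ENNReal.ofReal ((1 - lam) / 2) ≤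
      blochNormE ((3 - lam) / 2)
        (fun z => f (Complex.exp ((a * t : ℝ) * Complex.I) * z) - f z) := by
  set c := exp ((a * t : ℝ) * I)
  have hc : ‖c‖ = 1 := norm_exp_ofReal_mul_I _
  have hc1 : c ≠ 1 := exp_ofReal_mul_I_ne_one (mul_ne_zero ha ht0.ne') <| by
    rwa [abs_mul, abs_of_pos ht0, mul_comm, ← lt_div_iff₀ (abs_pos.2 ha)]
  have hμ : 0 < (1 - lam) / 2 := by linarith
  have hf' : f = fun z => (1 - z) ^ (-(((1 - lam) / 2 : ℝ) : ℂ)) := by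
    rw [hf]; push_cast; ring_nf
  subst hf'
  have hlim := tendsto_rpow_mul_norm_rotate_deriv_sub (μ := (1 - lam) / 2) (by linarith) hc hc1
  rw [abs_of_pos hμ, show 1 + (1 - lam) / 2 = (3 - lam) / 2 by ring] at hlim
  constructor
  · intro ε hε
    obtain ⟨r, hrε, hr⟩ := ((hlim.eventually (lt_mem_nhds (sub_lt_self _ hε))).and
      (Ioo_mem_nhdsLT one_pos)).exists
    exact ⟨r, hr.1, hr.2, hrε⟩
  · refine le_of_tendsto (ENNReal.tendsto_ofReal hlim) ?_
    filter_upwards [Ioo_mem_nhdsLT one_pos] with r hr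
    have hr1 : ‖(r : ℂ)‖ < 1 := by simpa [abs_of_pos hr.1] using hr.2
    have hdiff : ∀ z : ℂ, ‖z‖ < 1 →
        DifferentiableAt ℂ (fun z => (1 - z) ^ (-(((1 - lam) / 2 : ℝ) : ℂ))) z :=
      fun z hz => (hasDerivAt_one_sub_cpow _ (one_sub_mem_slitPlane hz)).differentiableAt
    rw [mul_comm (r : ℂ) c, ← deriv_comp_mul_sub (hdiff _ (by rwa [norm_mul, hc, one_mul]))
      (hdiff _ hr1)]
    exact ofReal_le_blochNormE (by linarith) _ hr.1.le hr.2

/-- For f(z) = (1−z)^{−(1−λ)/2}, a ∈ ℝ \ {0} and 0 < t < 2π/|a|,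
sup_{0<r<1}(1−r)^{(3−λ)/2}|e^{iat}f′(re^{iat}) − f′(r)| ≥ (1−λ)/2; in particular
‖f∘φ_t − f‖_{B^{(3−λ)/2}} ≥ (1−λ)/2 for the rotation semigroup φ_t(z)=e^{iat}z. -/
theorem rotation_bloch_lower_bound
    (lam : ℝ) (hlam0 : 0 < lam) (hlam1 : lam < 1)
    (f : ℂ → ℂ) (hf : f = fun z => (1 - z) ^ (-((1 : ℂ) - (lam : ℂ)) / 2))
    (a : ℝ) (ha : a ≠ 0) (t : ℝ) (ht0 : 0 < t) (ht1 : t < 2 * Real.pi / |a|) :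
    (∀ ε > 0, ∃ r : ℝ, 0 < r ∧ r < 1 ∧
      (1 - lam) / 2 - ε < (1 - r) ^ ((3 - lam) / 2) *
        ‖Complex.exp ((a * t : ℝ) * Complex.I) *
            deriv f ((r : ℂ) * Complex.exp ((a * t : ℝ) * Complex.I)) - deriv f (r : ℂ)‖) ∧
    ENNReal.ofReal ((1 - lam) / 2) ≤
      blochNormE ((3 - lam) / 2)
        (fun z => f (Complex.exp ((a * t : ℝ) * Complex.I) * z) - f z) :=
  rotation_bloch_lower_bound_general lam hlam1 f hf a ha t ht0 ht1
end
end

section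
/- Let 0 < λ < 1, ζ ∈ 𝕋, and let φ : 𝔻 → 𝔻 be holomorphic such that lim_{r→1⁻} φ(rζ) = w for some w ∈ 𝔻 and lim_{r→1⁻} (1−r)|φ′(rζ)| = 0. Put f_ζ(z) = (1−\bar{ζ}z)^{−(1−λ)/2}. Then limsup_{r→1⁻} (1−r)^{(3−λ)/2} |f_ζ′(φ(rζ)) φ′(rζ) − f_ζ′(rζ)| ≥ (1−λ)/2; hence ‖f_ζ∘φ − f_ζ‖_{B^{(3−λ)/2}} ≥ (1−λ)/2. -/
/-! Write `f_ζ = (1 - ζ̄z)^c` with `c = -(1-λ)/2`. The radial derivative `f_ζ′(rζ)` has size exactly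
`|c| (1 - r)^(c-1)`, so with the weight `(1 - r)^((3-λ)/2)` it contributes the constant
`(1-λ)/2`. The other term `f_ζ′(φ(rζ)) φ′(rζ)` is killed by the weight: `f_ζ′(φ(rζ)) → f_ζ′(w)`
stays bounded since `w` is interior, `(1 - r) φ′(rζ) → 0`, and the remaining factor
`(1 - r)^((1-λ)/2)` tends to `0`. Hence the weighted difference tends to `(1-λ)/2`, and radial points
already push the Bloch norm up to that value. -/

open Complex Set Filter Metric

noncomputable section

open ComplexConjugate Topology

lemma one_sub_mul_mem_slitPlane {a z : ℂ} (ha : ‖a‖ ≤ 1) (hz : z ∈ ball (0 : ℂ) 1) :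
    1 - a * z ∈ slitPlane := by
  rw [sub_eq_add_neg]
  refine mem_slitPlane_of_norm_lt_one ?_
  rw [norm_neg, norm_mul]
  exact (mul_le_of_le_one_left (norm_nonneg z) ha).trans_lt (mem_ball_zero_iff.mp hz)

lemma hasDerivAt_one_sub_mul_cpow {a c z : ℂ} (hz : 1 - a * z ∈ slitPlane) :
    HasDerivAt (fun z => (1 - a * z) ^ c) (c * (1 - a * z) ^ (c - 1) * -a) z := by
  simpa using (((hasDerivAt_id z).const_mul a).const_sub 1).cpow_const hz

lemma differentiableOn_one_sub_mul_cpow {a : ℂ} (ha : ‖a‖ ≤ 1) (c : ℂ) :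
    DifferentiableOn ℂ (fun z => (1 - a * z) ^ c) (ball 0 1) := fun _ hz =>
  (hasDerivAt_one_sub_mul_cpow (one_sub_mul_mem_slitPlane ha hz)).differentiableAt.differentiableWithinAt

lemma one_sub_rpow_mul_norm_deriv_one_sub_conj_mul_cpow {ζ : ℂ} (hζ : ‖ζ‖ = 1) (c : ℝ) {r : ℝ}
    (hr : r < 1) :
    (1 - r) ^ (1 - c) * ‖deriv (fun z => (1 - conj ζ * z) ^ (c : ℂ)) (r * ζ)‖ = |c| := by
  have hpos : 0 < 1 - r := sub_pos.mpr hr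
  have hray : 1 - conj ζ * (r * ζ) = ((1 - r : ℝ) : ℂ) := by
    rw [mul_left_comm, conj_mul', hζ]
    push_cast
    ring
  rw [(hasDerivAt_one_sub_mul_cpow (hray ▸ ofReal_mem_slitPlane.mpr hpos)).deriv, hray,
    norm_mul, norm_mul, norm_neg, RCLike.norm_conj, hζ, norm_cpow_eq_rpow_re_of_pos hpos,
    norm_real, Real.norm_eq_abs]
  have hexp : (1 - r) ^ (1 - c) * (1 - r) ^ ((c : ℂ) - 1).re = 1 := by
    rw [← Real.rpow_add hpos]
    simp
  linear_combination |c| * hexp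

lemma tendsto_mul_norm_sub {α E : Type*} [SeminormedAddCommGroup E] {l : Filter α}
    {s : α → ℝ} {a b : α → E} {L : ℝ} (hs : ∀ᶠ x in l, 0 ≤ s x)
    (ha : Tendsto (fun x => s x * ‖a x‖) l (𝓝 0)) (hb : Tendsto (fun x => s x * ‖b x‖) l (𝓝 L)) :
    Tendsto (fun x => s x * ‖a x - b x‖) l (𝓝 L) := by
  refine tendsto_of_tendsto_of_tendsto_of_le_of_le' (by simpa using hb.sub ha)
    (by simpa using hb.add ha) ?_ ?_ <;> filter_upwards [hs] with x hx
  · rw [← mul_sub, norm_sub_rev]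
    gcongr
    exact norm_sub_norm_le _ _
  · rw [← mul_add, add_comm]
    gcongr
    exact norm_sub_le _ _

lemma tendsto_one_sub_rpow_mul_norm_mul {p : ℝ} (hp : 1 ≤ p) {u v : ℝ → ℂ} {y : ℂ}
    (hu : Tendsto u (𝓝[<] 1) (𝓝 y)) (hv : Tendsto (fun r => (1 - r) * ‖v r‖) (𝓝[<] 1) (𝓝 0)) :
    Tendsto (fun r => (1 - r) ^ p * ‖u r * v r‖) (𝓝[<] 1) (𝓝 0) := by
  have hsub : Tendsto (fun r : ℝ => 1 - r) (𝓝[<] 1) (𝓝 0) :=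
    ((continuous_const.sub continuous_id).tendsto' 1 0 (sub_self 1)).mono_left
      nhdsWithin_le_nhds
  have hlim := (((Real.continuousAt_rpow_const 0 (p - 1) (Or.inr (sub_nonneg.mpr hp))).tendsto.comp
    hsub).mul hu.norm).mul hv
  rw [mul_zero] at hlim
  refine hlim.congr' ?_
  filter_upwards [self_mem_nhdsWithin] with r (hr : r < 1)
  have hpos : 0 < 1 - r := sub_pos.mpr hr
  rw [Function.comp_apply, norm_mul, Real.rpow_sub_one hpos.ne']
  field_simp

lemma deriv_comp_sub_self {f φ : ℂ → ℂ} {U : Set ℂ} (hU : IsOpen U) (hf : DifferentiableOn ℂ f U)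
    (hφ : DifferentiableOn ℂ φ U) (hmaps : MapsTo φ U U) {z : ℂ} (hz : z ∈ U) :
    deriv (f ∘ φ - f) z = deriv f (φ z) * deriv φ z - deriv f z := by
  have hfz := hf.differentiableAt (hU.mem_nhds hz)
  have hfφz := hf.differentiableAt (hU.mem_nhds (hmaps hz))
  have hφz := hφ.differentiableAt (hU.mem_nhds hz)
  rw [deriv_sub (hfφz.comp z hφz) hfz, deriv_comp z hfφz hφz]

lemma ofReal_le_blochNormE_of_tendsto {α L : ℝ} (hα : 0 ≤ α) {g : ℂ → ℂ} {ζ : ℂ} (hζ : ‖ζ‖ = 1)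
    (h : Tendsto (fun r : ℝ => (1 - r) ^ α * ‖deriv g (r * ζ)‖) (𝓝[<] 1) (𝓝 L)) :
    ENNReal.ofReal L ≤ blochNormE α g := by
  refine le_trans ?_ le_add_self
  refine le_of_tendsto ((ENNReal.continuous_ofReal.tendsto L).comp h) ?_
  filter_upwards [Ioo_mem_nhdsLT (show (0 : ℝ) < 1 by norm_num)] with r hr
  have hnorm : ‖(r : ℂ) * ζ‖ = r := by simp [hζ, abs_of_pos hr.1]
  refine le_trans ?_ (le_iSup₂ (f := fun z _ => ENNReal.ofReal ((1 - ‖z‖ ^ 2) ^ α * ‖deriv g z‖))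
    ((r : ℂ) * ζ) (by rw [mem_ball_zero_iff, hnorm]; exact hr.2))
  rw [Function.comp_apply, hnorm]
  gcongr
  · linarith [hr.2]
  · nlinarith [hr.1, hr.2]

theorem bloch_lower_bound_interior_limit_general
    (lam : ℝ) (hlam1 : lam < 1)
    (ζ : ℂ) (hζ : ‖ζ‖ = 1)
    (φ : ℂ → ℂ) (hφhol : DifferentiableOn ℂ φ (ball (0:ℂ) 1))
    (hφmaps : MapsTo φ (ball (0:ℂ) 1) (ball (0:ℂ) 1))
    (w : ℂ) (hw : w ∈ ball (0:ℂ) 1)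
    (hlim : Tendsto (fun r : ℝ => φ ((r : ℂ) * ζ)) (nhdsWithin 1 (Iio 1)) (nhds w))
    (hder : Tendsto (fun r : ℝ => (1 - r) * ‖deriv φ ((r : ℂ) * ζ)‖)
      (nhdsWithin 1 (Iio 1)) (nhds 0))
    (fζ : ℂ → ℂ)
    (hfζ : fζ = fun z => (1 - (starRingEnd ℂ) ζ * z) ^ (-((1 : ℂ) - (lam : ℂ)) / 2)) :
    (∀ ε > 0, ∃ᶠ r : ℝ in nhdsWithin 1 (Iio 1),
      (1 - lam) / 2 - ε < (1 - r) ^ ((3 - lam) / 2) *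
        ‖deriv fζ (φ ((r : ℂ) * ζ)) * deriv φ ((r : ℂ) * ζ) - deriv fζ ((r : ℂ) * ζ)‖) ∧
    ENNReal.ofReal ((1 - lam) / 2) ≤ blochNormE ((3 - lam) / 2) (fζ ∘ φ - fζ) := by
  set c : ℝ := -(1 - lam) / 2
  have hexp : (3 - lam) / 2 = 1 - c := by ring
  have hconst : (1 - lam) / 2 = |c| := by rw [abs_of_neg (by linarith)]; ring
  have hfζc : fζ = fun z => (1 - conj ζ * z) ^ (c : ℂ) := by
    rw [hfζ, show -((1 : ℂ) - lam) / 2 = c by push_cast [c]; ring]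
  rw [hexp, hconst]
  have hfζhol : DifferentiableOn ℂ fζ (ball 0 1) :=
    hfζc ▸ differentiableOn_one_sub_mul_cpow (by simp [hζ]) _
  have hfζφ : Tendsto (fun r : ℝ => deriv fζ (φ (r * ζ))) (𝓝[<] 1) (𝓝 (deriv fζ w)) :=
    ((hfζhol.deriv isOpen_ball).continuousOn.continuousAt (isOpen_ball.mem_nhds hw)).tendsto.comp
      hlim
  have hweighted : Tendsto (fun r : ℝ => (1 - r) ^ (1 - c) *
      ‖deriv fζ (φ (r * ζ)) * deriv φ (r * ζ) - deriv fζ (r * ζ)‖) (𝓝[<] 1) (𝓝 |c|) := by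
    refine tendsto_mul_norm_sub ?_ (tendsto_one_sub_rpow_mul_norm_mul (by linarith) hfζφ hder)
      (tendsto_const_nhds.congr' ?_) <;> filter_upwards [self_mem_nhdsWithin] with r (hr : r < 1)
    · exact Real.rpow_nonneg (sub_pos.mpr hr).le _
    · rw [hfζc, one_sub_rpow_mul_norm_deriv_one_sub_conj_mul_cpow hζ c hr]
  refine ⟨fun ε hε => (hweighted.eventually (lt_mem_nhds (by linarith))).frequently,
    ofReal_le_blochNormE_of_tendsto (by linarith) hζ (hweighted.congr' ?_)⟩
  filter_upwards [Ioo_mem_nhdsLT (show (0 : ℝ) < 1 by norm_num)] with r hr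
  have hrζ : (r : ℂ) * ζ ∈ ball (0 : ℂ) 1 := by simp [hζ, abs_of_pos hr.1, hr.2]
  rw [deriv_comp_sub_self isOpen_ball hfζhol hφhol hφmaps hrζ]

/-- If the holomorphic self-map φ of 𝔻 has radial limit w ∈ 𝔻 at ζ ∈ 𝕋 and
(1−r)|φ′(rζ)| → 0, then for f_ζ(z) = (1−\bar{ζ}z)^{−(1−λ)/2},
limsup_{r→1⁻}(1−r)^{(3−λ)/2}|f_ζ′(φ(rζ))φ′(rζ) − f_ζ′(rζ)| ≥ (1−λ)/2, so
‖f_ζ∘φ − f_ζ‖_{B^{(3−λ)/2}} ≥ (1−λ)/2. -/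
theorem bloch_lower_bound_interior_limit
    (lam : ℝ) (hlam0 : 0 < lam) (hlam1 : lam < 1)
    (ζ : ℂ) (hζ : ‖ζ‖ = 1)
    (φ : ℂ → ℂ) (hφhol : DifferentiableOn ℂ φ (ball (0:ℂ) 1))
    (hφmaps : MapsTo φ (ball (0:ℂ) 1) (ball (0:ℂ) 1))
    (w : ℂ) (hw : w ∈ ball (0:ℂ) 1)
    (hlim : Tendsto (fun r : ℝ => φ ((r : ℂ) * ζ)) (nhdsWithin 1 (Iio 1)) (nhds w))
    (hder : Tendsto (fun r : ℝ => (1 - r) * ‖deriv φ ((r : ℂ) * ζ)‖)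
      (nhdsWithin 1 (Iio 1)) (nhds 0))
    (fζ : ℂ → ℂ)
    (hfζ : fζ = fun z => (1 - (starRingEnd ℂ) ζ * z) ^ (-((1 : ℂ) - (lam : ℂ)) / 2)) :
    (∀ ε > 0, ∃ᶠ r : ℝ in nhdsWithin 1 (Iio 1),
      (1 - lam) / 2 - ε < (1 - r) ^ ((3 - lam) / 2) *
        ‖deriv fζ (φ ((r : ℂ) * ζ)) * deriv φ ((r : ℂ) * ζ) - deriv fζ ((r : ℂ) * ζ)‖) ∧
    ENNReal.ofReal ((1 - lam) / 2) ≤ blochNormE ((3 - lam) / 2) (fζ ∘ φ - fζ) :=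
  bloch_lower_bound_interior_limit_general lam hlam1 ζ hζ φ hφhol hφmaps w hw hlim hder fζ hfζ

end
end

section
/- Let 0 < λ < 1, let ζ, ω ∈ 𝕋 with ω ≠ ζ, and let φ : 𝔻 → 𝔻 be holomorphic such that lim_{r→1⁻} φ(rζ) = ω and sup_{0<r<1} |φ′(rζ)| < ∞. Put f_ζ(z) = (1−\bar{ζ}z)^{−(1−λ)/2}. Then limsup_{r→1⁻} (1−r)^{(3−λ)/2} |f_ζ′(φ(rζ)) φ′(rζ) − f_ζ′(rζ)| ≥ (1−λ)/2; hence ‖f_ζ∘φ − f_ζ‖_{B^{(3−λ)/2}} ≥ (1−λ)/2. -/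
/-!
On the radius towards `ζ` one has `1 - ζ̄ (r ζ) = 1 - r`, so `(1 - r)^((3-λ)/2) |f_ζ'(r ζ)|` equals
`(1 - λ)/2` exactly. Since `φ(r ζ) → ω ≠ ζ` and `f_ζ` is holomorphic near `ω`, the factor
`f_ζ'(φ(r ζ))` stays bounded, as does `φ'(r ζ)`; the weight `(1 - r)^((3-λ)/2)` kills their
product. So the weighted difference tends to `(1 - λ)/2`, and every radial value bounds the Bloch
norm from below because `1 - r ≤ 1 - r²`.
-/

open Complex Set Filter Metric

noncomputable section

open ComplexConjugate Topology

theorem deriv_comp_sub {𝕜 : Type*} [NontriviallyNormedField 𝕜] {f φ : 𝕜 → 𝕜} {z : 𝕜}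
    (hf : DifferentiableAt 𝕜 f (φ z)) (hφ : DifferentiableAt 𝕜 φ z)
    (hf' : DifferentiableAt 𝕜 f z) :
    deriv (f ∘ φ - f) z = deriv f (φ z) * deriv φ z - deriv f z := by
  rw [← deriv_comp z hf hφ]
  exact deriv_sub (hf.comp z hφ) hf'

theorem tendsto_mul_norm_sub_of_tendsto {ι E : Type*} [SeminormedAddCommGroup E] {l : Filter ι}
    {w : ι → ℝ} {a b : ι → E} {c : ℝ} (hw : ∀ᶠ i in l, 0 ≤ w i)
    (ha : Tendsto (fun i => w i * ‖a i‖) l (𝓝 0))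
    (hb : Tendsto (fun i => w i * ‖b i‖) l (𝓝 c)) :
    Tendsto (fun i => w i * ‖a i - b i‖) l (𝓝 c) := by
  have hdiff : Tendsto (fun i => w i * ‖a i - b i‖ - w i * ‖b i‖) l (𝓝 0) := by
    refine squeeze_zero_norm' ?_ ha
    filter_upwards [hw] with i hi
    rw [← mul_sub, norm_mul, Real.norm_of_nonneg hi, Real.norm_eq_abs]
    gcongr
    simpa using abs_norm_sub_norm_le (a i - b i) (-b i)
  simpa using hdiff.add hb

theorem Complex.one_sub_mem_slitPlane_of_norm_le {w : ℂ} (hw : ‖w‖ ≤ 1) (hw1 : w ≠ 1) :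
    1 - w ∈ slitPlane := by
  refine mem_slitPlane_iff.2 (Or.inl ?_)
  rw [sub_re, one_re, sub_pos]
  by_contra! hre
  have him : w.im = 0 := by
    by_contra him
    linarith [abs_re_lt_norm.2 him, le_abs_self w.re]
  exact hw1 (ext (by simp only [one_re]; linarith [re_le_norm w]) (by simpa using him))

theorem one_sub_conj_mul_mem_slitPlane {ζ w : ℂ} (hζ : ‖ζ‖ = 1) (hw : ‖w‖ ≤ 1) (hne : w ≠ ζ) :
    1 - conj ζ * w ∈ slitPlane := by
  have hζζ : ζ * conj ζ = 1 := by rw [mul_conj, normSq_eq_norm_sq, hζ]; norm_num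
  refine one_sub_mem_slitPlane_of_norm_le (by rwa [norm_mul, norm_conj, hζ, one_mul])
    fun h => hne ?_
  rw [← one_mul w, ← hζζ, mul_assoc, h, mul_one]

theorem one_sub_conj_mul_ofReal_mul {ζ : ℂ} (hζ : ‖ζ‖ = 1) (r : ℝ) :
    1 - conj ζ * (r * ζ) = ((1 - r : ℝ) : ℂ) := by
  have hζζ : conj ζ * ζ = 1 := by rw [conj_mul', hζ]; norm_num
  rw [mul_left_comm, hζζ, mul_one]
  push_cast
  ring

theorem one_sub_conj_mul_ofReal_mul_mem_slitPlane {ζ : ℂ} (hζ : ‖ζ‖ = 1) {r : ℝ} (hr : r < 1) :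
    1 - conj ζ * (r * ζ) ∈ slitPlane := by
  rw [one_sub_conj_mul_ofReal_mul hζ r, ofReal_mem_slitPlane]
  linarith

theorem ofReal_mul_mem_ball {ζ : ℂ} (hζ : ‖ζ‖ = 1) {r : ℝ} (hr0 : 0 ≤ r) (hr1 : r < 1) :
    (r : ℂ) * ζ ∈ ball (0 : ℂ) 1 := by
  rwa [mem_ball_zero_iff, norm_mul, hζ, mul_one, norm_real, Real.norm_of_nonneg hr0]

/-- `f_ζ` is `boundaryPow ζ (-(1 - λ)/2)`; `cpow` is the principal branch, so it is holomorphic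
wherever `1 - ζ̄ z ∈ slitPlane`, in particular on the closed disc minus `ζ`. -/
def boundaryPow (ζ s : ℂ) (z : ℂ) : ℂ := (1 - conj ζ * z) ^ s

theorem hasDerivAt_boundaryPow {ζ s z : ℂ} (hz : 1 - conj ζ * z ∈ slitPlane) :
    HasDerivAt (boundaryPow ζ s) (s * (1 - conj ζ * z) ^ (s - 1) * -conj ζ) z := by
  have hlin : HasDerivAt (fun w => 1 - conj ζ * w) (-conj ζ) z := by
    simpa using ((hasDerivAt_id z).const_mul (conj ζ)).const_sub 1
  exact hlin.cpow_const hz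

theorem eventually_differentiableAt_boundaryPow {ζ s z : ℂ} (hz : 1 - conj ζ * z ∈ slitPlane) :
    ∀ᶠ w in 𝓝 z, DifferentiableAt ℂ (boundaryPow ζ s) w :=
  ((continuous_const.sub (continuous_const.mul continuous_id)).continuousAt.eventually
    (isOpen_slitPlane.mem_nhds hz)).mono fun _ hw => (hasDerivAt_boundaryPow hw).differentiableAt

theorem continuousAt_deriv_boundaryPow {ζ s z : ℂ} (hz : 1 - conj ζ * z ∈ slitPlane) :
    ContinuousAt (deriv (boundaryPow ζ s)) z :=
  (analyticAt_iff_eventually_differentiableAt.2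
    (eventually_differentiableAt_boundaryPow hz)).deriv.continuousAt

theorem rpow_mul_norm_deriv_boundaryPow_ofReal_mul {ζ : ℂ} (hζ : ‖ζ‖ = 1) (s : ℝ) {r : ℝ}
    (hr : r < 1) : (1 - r) ^ (1 - s) * ‖deriv (boundaryPow ζ s) (r * ζ)‖ = |s| := by
  have h1r : 0 < 1 - r := sub_pos.2 hr
  rw [(hasDerivAt_boundaryPow (one_sub_conj_mul_ofReal_mul_mem_slitPlane hζ hr)).deriv,
    one_sub_conj_mul_ofReal_mul hζ r, norm_mul, norm_mul,
    norm_neg, norm_conj, hζ, mul_one, norm_real, Real.norm_eq_abs,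
    norm_cpow_eq_rpow_re_of_pos h1r, ← ofReal_one, ← ofReal_sub, ofReal_re, mul_left_comm,
    ← Real.rpow_add h1r]
  simp

theorem tendsto_rpow_mul_norm_deriv_boundaryPow_comp_sub {s : ℝ} (hs : s < 1) {ζ ω : ℂ}
    (hζ : ‖ζ‖ = 1) (hω : ‖ω‖ ≤ 1) (hne : ω ≠ ζ) {φ : ℂ → ℂ}
    (hlim : Tendsto (fun r : ℝ => φ (r * ζ)) (𝓝[<] 1) (𝓝 ω))
    (hφ' : IsBoundedUnder (· ≤ ·) (𝓝[<] 1) fun r : ℝ => ‖deriv φ (r * ζ)‖) :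
    Tendsto (fun r : ℝ => (1 - r) ^ (1 - s) * ‖deriv (boundaryPow ζ s) (φ (r * ζ)) *
      deriv φ (r * ζ) - deriv (boundaryPow ζ s) (r * ζ)‖) (𝓝[<] 1) (𝓝 |s|) := by
  have hw : Tendsto (fun r : ℝ => (1 - r) ^ (1 - s)) (𝓝[<] 1) (𝓝 0) := by
    have h1r : Tendsto (fun r : ℝ => 1 - r) (𝓝[<] 1) (𝓝 0) := by
      simpa using ((continuous_sub_left (1 : ℝ)).tendsto 1).mono_left nhdsWithin_le_nhds
    simpa [Real.zero_rpow (by linarith : 1 - s ≠ 0)] using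
      h1r.rpow_const (Or.inr (by linarith : (0 : ℝ) ≤ 1 - s))
  have hf' : Tendsto (fun r : ℝ => ‖deriv (boundaryPow ζ s) (φ (r * ζ))‖) (𝓝[<] 1)
      (𝓝 ‖deriv (boundaryPow ζ s) ω‖) :=
    ((continuousAt_deriv_boundaryPow (one_sub_conj_mul_mem_slitPlane hζ hω hne)).tendsto.comp
      hlim).norm
  refine tendsto_mul_norm_sub_of_tendsto ?_ ?_ ?_
  · filter_upwards [self_mem_nhdsWithin] with r hr
    exact Real.rpow_nonneg (sub_nonneg.2 (le_of_lt hr)) _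
  · have h0 : Tendsto (fun r : ℝ => (1 - r) ^ (1 - s) * ‖deriv (boundaryPow ζ s) (φ (r * ζ))‖)
        (𝓝[<] 1) (𝓝 0) := by simpa using hw.mul hf'
    simp only [norm_mul, ← mul_assoc]
    exact h0.zero_mul_isBoundedUnder_le (by simpa [Function.comp_def] using hφ')
  · refine tendsto_const_nhds.congr' ?_
    filter_upwards [self_mem_nhdsWithin] with r hr
    exact (rpow_mul_norm_deriv_boundaryPow_ofReal_mul hζ s hr).symm

theorem ofReal_rpow_mul_norm_deriv_le_blochNormE {α : ℝ} (hα : 0 ≤ α) (g : ℂ → ℂ) {ζ : ℂ}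
    (hζ : ‖ζ‖ = 1) {r : ℝ} (hr0 : 0 ≤ r) (hr1 : r < 1) :
    ENNReal.ofReal ((1 - r) ^ α * ‖deriv g (r * ζ)‖) ≤ blochNormE α g := by
  have hnorm : ‖(r : ℂ) * ζ‖ = r := by
    rw [norm_mul, hζ, mul_one, norm_real, Real.norm_of_nonneg hr0]
  calc ENNReal.ofReal ((1 - r) ^ α * ‖deriv g (r * ζ)‖)
      ≤ ENNReal.ofReal ((1 - ‖(r : ℂ) * ζ‖ ^ 2) ^ α * ‖deriv g (r * ζ)‖) := by
        rw [hnorm]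
        gcongr
        nlinarith
    _ ≤ ⨆ z ∈ ball (0 : ℂ) 1, ENNReal.ofReal ((1 - ‖z‖ ^ 2) ^ α * ‖deriv g z‖) :=
        le_iSup₂ (f := fun z _ => ENNReal.ofReal ((1 - ‖z‖ ^ 2) ^ α * ‖deriv g z‖)) _
          (ofReal_mul_mem_ball hζ hr0 hr1)
    _ ≤ blochNormE α g := le_add_self

theorem bloch_lower_bound_boundary_limit_general
    (lam : ℝ) (hlam1 : lam < 1)
    (ζ ω : ℂ) (hζ : ‖ζ‖ = 1) (hω : ‖ω‖ = 1) (hne : ω ≠ ζ)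
    (φ : ℂ → ℂ) (hφhol : DifferentiableOn ℂ φ (ball (0:ℂ) 1))
    (hlim : Tendsto (fun r : ℝ => φ ((r : ℂ) * ζ)) (nhdsWithin 1 (Iio 1)) (nhds ω))
    (hder : ∃ M : ℝ, ∀ r ∈ Set.Ioo (0:ℝ) 1, ‖deriv φ ((r : ℂ) * ζ)‖ ≤ M)
    (fζ : ℂ → ℂ)
    (hfζ : fζ = fun z => (1 - (starRingEnd ℂ) ζ * z) ^ (-((1 : ℂ) - (lam : ℂ)) / 2)) :
    (∀ ε > 0, ∃ᶠ r : ℝ in nhdsWithin 1 (Iio 1),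
      (1 - lam) / 2 - ε < (1 - r) ^ ((3 - lam) / 2) *
        ‖deriv fζ (φ ((r : ℂ) * ζ)) * deriv φ ((r : ℂ) * ζ) - deriv fζ ((r : ℂ) * ζ)‖) ∧
    ENNReal.ofReal ((1 - lam) / 2) ≤ blochNormE ((3 - lam) / 2) (fζ ∘ φ - fζ) := by
  obtain ⟨M, hM⟩ := hder
  have hf : fζ = boundaryPow ζ ((lam - 1) / 2 : ℝ) := by
    rw [hfζ]
    ext z
    simp only [boundaryPow]
    push_cast
    ring_nf
  have hφ' : IsBoundedUnder (· ≤ ·) (𝓝[<] 1) fun r : ℝ => ‖deriv φ (r * ζ)‖ :=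
    ⟨M, eventually_map.2 (eventually_of_mem (Ioo_mem_nhdsLT one_pos) hM)⟩
  have hlimit := tendsto_rpow_mul_norm_deriv_boundaryPow_comp_sub (s := (lam - 1) / 2)
    (by linarith) hζ hω.le hne hlim hφ'
  rw [abs_of_neg (by linarith), show 1 - (lam - 1) / 2 = (3 - lam) / 2 by ring,
    show -((lam - 1) / 2) = (1 - lam) / 2 by ring] at hlimit
  subst hf
  refine ⟨fun ε hε => (hlimit.eventually (lt_mem_nhds (by linarith))).frequently, ?_⟩
  refine le_of_tendsto (ENNReal.tendsto_ofReal hlimit) ?_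
  filter_upwards [Ioo_mem_nhdsLT one_pos, hlim.eventually
    (eventually_differentiableAt_boundaryPow (one_sub_conj_mul_mem_slitPlane hζ hω.le hne))]
    with r hr hfφ
  rw [← deriv_comp_sub hfφ (hφhol.differentiableAt (isOpen_ball.mem_nhds
    (ofReal_mul_mem_ball hζ hr.1.le hr.2)))
    (hasDerivAt_boundaryPow (one_sub_conj_mul_ofReal_mul_mem_slitPlane hζ hr.2)).differentiableAt]
  exact ofReal_rpow_mul_norm_deriv_le_blochNormE (by linarith) _ hζ hr.1.le hr.2

/-- If the holomorphic self-map φ of 𝔻 has radial limit ω ∈ 𝕋, ω ≠ ζ, at ζ ∈ 𝕋,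
with bounded radial derivative, then for f_ζ(z) = (1−\bar{ζ}z)^{−(1−λ)/2},
limsup_{r→1⁻}(1−r)^{(3−λ)/2}|f_ζ′(φ(rζ))φ′(rζ) − f_ζ′(rζ)| ≥ (1−λ)/2, so
‖f_ζ∘φ − f_ζ‖_{B^{(3−λ)/2}} ≥ (1−λ)/2. -/
theorem bloch_lower_bound_boundary_limit
    (lam : ℝ) (hlam0 : 0 < lam) (hlam1 : lam < 1)
    (ζ ω : ℂ) (hζ : ‖ζ‖ = 1) (hω : ‖ω‖ = 1) (hne : ω ≠ ζ)
    (φ : ℂ → ℂ) (hφhol : DifferentiableOn ℂ φ (ball (0:ℂ) 1))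
    (hφmaps : MapsTo φ (ball (0:ℂ) 1) (ball (0:ℂ) 1))
    (hlim : Tendsto (fun r : ℝ => φ ((r : ℂ) * ζ)) (nhdsWithin 1 (Iio 1)) (nhds ω))
    (hder : ∃ M : ℝ, ∀ r ∈ Set.Ioo (0:ℝ) 1, ‖deriv φ ((r : ℂ) * ζ)‖ ≤ M)
    (fζ : ℂ → ℂ)
    (hfζ : fζ = fun z => (1 - (starRingEnd ℂ) ζ * z) ^ (-((1 : ℂ) - (lam : ℂ)) / 2)) :
    (∀ ε > 0, ∃ᶠ r : ℝ in nhdsWithin 1 (Iio 1),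
      (1 - lam) / 2 - ε < (1 - r) ^ ((3 - lam) / 2) *
        ‖deriv fζ (φ ((r : ℂ) * ζ)) * deriv φ ((r : ℂ) * ζ) - deriv fζ ((r : ℂ) * ζ)‖) ∧
    ENNReal.ofReal ((1 - lam) / 2) ≤ blochNormE ((3 - lam) / 2) (fζ ∘ φ - fζ) :=
  bloch_lower_bound_boundary_limit_general lam hlam1 ζ ω hζ hω hne φ hφhol hlim hder fζ hfζ

end
end
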